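/- Under random cyclic sampling (each epoch {τ(k)}_{k=jM+1}^{(j+1)M} is a permutation of {1,…,M}), let {Λ_k} be reals with λ_k = Σ_{i=1}^{k} Λ_i > 0 for all k. For arbitrary x_0, the sampled Tikhonov iterates x_k = x_{k-1} − B_k(A_{τ(k)}ᵀ(A_{τ(k)} x_{k-1} − b_{τ(k)}) + Λ_k LᵀL x_{k-1}), with B_k = (λ_k LᵀL + Σ_{i=1}^{k} A_{τ(i)}ᵀA_{τ(i)})^{-1}, satisfy x_{jM} = (AᵀA + (λ_{jM}/j) LᵀL)^{-1} Aᵀ b after each epoch j, i.e. the epoch iterate is the Tikhonov solution with parameter λ_{jM}/j. -/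

import Mathlib

open Matrix Finset

/-!
Write `C k = λ_k LᵀL + Σ_{i ≤ k} A_{τ(i)}ᵀ A_{τ(i)}` for the matrix inverted in `B_k`. Since
`C k - C (k-1)` is exactly the matrix applied to `x_{k-1}` in the update, the iterates satisfy the
regularized normal equations of the blocks sampled so far, `C k x_k = Σ_{i ≤ k} A_{τ(i)}ᵀ b_{τ(i)}`,
whatever `x_0` is. After `j` epochs every block has been seen exactly `j` times, and
`Σ W_i W_iᵀ = I` turns the right-hand side into `j Aᵀb` and `C (jM)` into
`j (AᵀA + (λ_{jM}/j) LᵀL)`.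
-/

theorem Matrix.mulVec_injective_of_rank_eq_card {m n K : Type*} [Fintype m] [Fintype n]
    [Field K] {A : Matrix m n K} (hA : A.rank = Fintype.card n) : Function.Injective A.mulVec := by
  have hker : Module.finrank K (LinearMap.ker A.mulVecLin) = 0 := by
    have := A.mulVecLin.finrank_range_add_finrank_ker
    rw [← Matrix.rank, hA, Module.finrank_fintype_fun_eq_card] at this
    omega
  exact LinearMap.ker_eq_bot.mp (Submodule.finrank_eq_zero.mp hker)

theorem Matrix.posDef_transpose_mul_self_of_rank_eq_card {m n : Type*} [Fintype m] [Fintype n]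
    {A : Matrix m n ℝ} (hA : A.rank = Fintype.card n) : (Aᵀ * A).PosDef := by
  simpa using PosDef.conjTranspose_mul_self A (mulVec_injective_of_rank_eq_card hA)

theorem Matrix.posSemidef_transpose_mul_self {m n : Type*} [Fintype m] [Fintype n] (A : Matrix m n ℝ) :
    (Aᵀ * A).PosSemidef := by
  simpa using posSemidef_conjTranspose_mul_self A

theorem Matrix.sum_transpose_mul_self_of_sum_mul_transpose_eq_one {ι m n ℓ : Type*}
    [Fintype ι] [Fintype m] [DecidableEq m] [Fintype ℓ] {W : ι → Matrix m ℓ ℝ}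
    (hW : ∑ i, W i * (W i)ᵀ = 1) (A : Matrix m n ℝ) :
    ∑ i, ((W i)ᵀ * A)ᵀ * ((W i)ᵀ * A) = Aᵀ * A := by
  simp_rw [transpose_mul, transpose_transpose, Matrix.mul_assoc, ← Matrix.mul_assoc (W _)]
  rw [← Matrix.mul_sum, ← Matrix.sum_mul, hW, Matrix.one_mul]

theorem Matrix.sum_transpose_mulVec_of_sum_mul_transpose_eq_one {ι m n ℓ : Type*}
    [Fintype ι] [Fintype m] [DecidableEq m] [Fintype ℓ] {W : ι → Matrix m ℓ ℝ}
    (hW : ∑ i, W i * (W i)ᵀ = 1) (A : Matrix m n ℝ) (b : m → ℝ) :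
    ∑ i, ((W i)ᵀ * A)ᵀ *ᵥ ((W i)ᵀ *ᵥ b) = Aᵀ *ᵥ b := by
  simp_rw [transpose_mul, transpose_transpose, mulVec_mulVec, Matrix.mul_assoc]
  rw [← sum_mulVec, ← Matrix.mul_sum, hW, Matrix.mul_one]

theorem Finset.sum_range_mul_comp_eq_nsmul_sum {M : ℕ} {α : Type*} [AddCommMonoid α]
    {τ : ℕ → Fin M} (hτ : ∀ j : ℕ, Function.Bijective (fun t : Fin M => τ (j * M + (t : ℕ))))
    (f : Fin M → α) (j : ℕ) :
    ∑ i ∈ range (j * M), f (τ i) = j • ∑ i, f i := by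
  induction j with
  | zero => simp
  | succ j ih =>
    have hepoch : ∑ i ∈ range M, f (τ (j * M + i)) = ∑ i, f i := by
      rw [sum_range fun i => f (τ (j * M + i))]
      exact Fintype.sum_bijective _ (hτ j) _ f fun _ => rfl
    rw [add_mul, one_mul, sum_range_add, ih, hepoch, succ_nsmul]

section Recursion

variable {n K : Type*} [Fintype n] [DecidableEq n] [CommRing K]

/-- The invariant of recursive least squares. -/
theorem Matrix.sum_range_mulVec_eq_of_recursion (Δ : ℕ → Matrix n n K) (r x : ℕ → n → K)
    (hΔ : ∀ k, IsUnit (∑ i ∈ range (k + 1), Δ i))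
    (hx : ∀ k, x (k + 1) = x k - (∑ i ∈ range (k + 1), Δ i)⁻¹ *ᵥ (Δ k *ᵥ x k - r k)) (k : ℕ) :
    (∑ i ∈ range k, Δ i) *ᵥ x k = ∑ i ∈ range k, r i := by
  induction k with
  | zero => simp
  | succ k ih =>
    have hinv := mul_nonsing_inv _ ((isUnit_iff_isUnit_det _).mp (hΔ k))
    rw [hx k, mulVec_sub, mulVec_mulVec, hinv, one_mulVec, sum_range_succ, sum_range_succ, ← ih,
      add_mulVec]
    abel

end Recursion

theorem Matrix.tikhonov_iterate_normal_eq {n ι : Type*} [Fintype n] [DecidableEq n] [Fintype ι]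
    {D : Matrix n n ℝ} (hD : D.PosDef) (A : ℕ → Matrix ι n ℝ) (b : ℕ → ι → ℝ)
    {Lam lam : ℕ → ℝ} (hlam : ∀ k, lam k = ∑ i ∈ range k, Lam i) (hpos : ∀ k, 0 < k → 0 < lam k)
    (x : ℕ → n → ℝ)
    (hx : ∀ k, x (k + 1) = x k - (lam (k + 1) • D + ∑ i ∈ range (k + 1), (A i)ᵀ * A i)⁻¹ *ᵥ
      ((A k)ᵀ *ᵥ (A k *ᵥ x k - b k) + Lam k • D *ᵥ x k)) (k : ℕ) :
    (lam k • D + ∑ i ∈ range k, (A i)ᵀ * A i) *ᵥ x k = ∑ i ∈ range k, (A i)ᵀ *ᵥ b i := by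
  have hsum : ∀ k, lam k • D + ∑ i ∈ range k, (A i)ᵀ * A i
      = ∑ i ∈ range k, (Lam i • D + (A i)ᵀ * A i) := fun k => by
    rw [sum_add_distrib, ← sum_smul, hlam]
  rw [hsum]
  refine sum_range_mulVec_eq_of_recursion _ _ x (fun k => ?_) (fun k => ?_) k
  · rw [← hsum]
    exact ((hD.smul (hpos _ k.succ_pos)).add_posSemidef
      (posSemidef_sum _ fun i _ => posSemidef_transpose_mul_self (A i))).isUnit
  · rw [hx k, hsum, add_mulVec, smul_mulVec, mulVec_sub, mulVec_mulVec]
    abel_nf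

theorem sTik_epoch_iterate_general
    {m n s ℓ M : ℕ} (hM : 0 < M)
    (A : Matrix (Fin m) (Fin n) ℝ) (b : Fin m → ℝ)
    (L : Matrix (Fin s) (Fin n) ℝ) (hL : L.rank = n)
    (W : Fin M → Matrix (Fin m) (Fin ℓ) ℝ)
    (hW : ∑ i, W i * (W i)ᵀ = (1 : Matrix (Fin m) (Fin m) ℝ))
    (τ : ℕ → Fin M)
    (hτ : ∀ j : ℕ, Function.Bijective (fun t : Fin M => τ (j * M + (t : ℕ))))
    (Ai : Fin M → Matrix (Fin ℓ) (Fin n) ℝ) (hAi : ∀ i, Ai i = (W i)ᵀ * A)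
    (bi : Fin M → Fin ℓ → ℝ) (hbi : ∀ i, bi i = (W i)ᵀ.mulVec b)
    (Lam : ℕ → ℝ) (lam : ℕ → ℝ)
    (hlamdef : ∀ j, lam j = ∑ i ∈ Finset.range j, Lam i)
    (hpos : ∀ j, 0 < j → 0 < lam j)
    (B : ℕ → Matrix (Fin n) (Fin n) ℝ)
    (hB : ∀ j, B j = (lam j • (Lᵀ * L) + ∑ i ∈ Finset.range j, (Ai (τ i))ᵀ * Ai (τ i))⁻¹)
    (x : ℕ → Fin n → ℝ)
    (hx : ∀ k, x (k + 1) =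
      x k - (B (k + 1)).mulVec ((Ai (τ k))ᵀ.mulVec ((Ai (τ k)).mulVec (x k) - bi (τ k))
        + Lam k • (Lᵀ * L).mulVec (x k))) :
    ∀ j : ℕ, 0 < j →
      x (j * M) = (Aᵀ * A + (lam (j * M) / (j : ℝ)) • (Lᵀ * L))⁻¹.mulVec (Aᵀ.mulVec b) := by
  obtain rfl : Ai = fun i => (W i)ᵀ * A := funext hAi
  obtain rfl : bi = fun i => (W i)ᵀ *ᵥ b := funext hbi
  intro j hj
  have hjR : (0 : ℝ) < j := Nat.cast_pos.mpr hj
  have hD : (Lᵀ * L).PosDef := posDef_transpose_mul_self_of_rank_eq_card (by simpa using hL)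
  have hnormal := tikhonov_iterate_normal_eq hD _ _ hlamdef hpos x
    (fun k => (hx k).trans (by rw [hB])) (j * M)
  rw [sum_range_mul_comp_eq_nsmul_sum hτ (fun i => ((W i)ᵀ * A)ᵀ * ((W i)ᵀ * A)),
    sum_range_mul_comp_eq_nsmul_sum hτ (fun i => ((W i)ᵀ * A)ᵀ *ᵥ ((W i)ᵀ *ᵥ b)),
    sum_transpose_mul_self_of_sum_mul_transpose_eq_one hW,
    sum_transpose_mulVec_of_sum_mul_transpose_eq_one hW, ← Nat.cast_smul_eq_nsmul ℝ,
    ← Nat.cast_smul_eq_nsmul ℝ] at hnormal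
  set E := Aᵀ * A + (lam (j * M) / j) • (Lᵀ * L)
  have hE : E.PosDef := (hD.smul (div_pos (hpos _ (Nat.mul_pos hj hM)) hjR)).posSemidef_add
    (posSemidef_transpose_mul_self A)
  have hCE : lam (j * M) • (Lᵀ * L) + (j : ℝ) • (Aᵀ * A) = (j : ℝ) • E := by
    rw [smul_add, smul_smul, mul_div_cancel₀ _ hjR.ne', add_comm]
  rw [hCE, smul_mulVec] at hnormal
  have := hE.isUnit.invertible
  exact (inv_mulVec_eq_vec (smul_right_injective _ hjR.ne' hnormal).symm).symm

/-- under random cyclic sampling, the sampled Tikhonov iterate after the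
`j`-th epoch is the Tikhonov solution with regularization parameter `λ_{jM}/j`. -/
theorem sTik_epoch_iterate
    {m n s ℓ M : ℕ} (hM : 0 < M)
    (A : Matrix (Fin m) (Fin n) ℝ) (b : Fin m → ℝ)
    (L : Matrix (Fin s) (Fin n) ℝ) (hL : L.rank = n)
    (W : Fin M → Matrix (Fin m) (Fin ℓ) ℝ)
    (hW : ∑ i, W i * (W i)ᵀ = (1 : Matrix (Fin m) (Fin m) ℝ))
    (τ : ℕ → Fin M)
    (hτ : ∀ j : ℕ, Function.Bijective (fun t : Fin M => τ (j * M + (t : ℕ))))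
    (Ai : Fin M → Matrix (Fin ℓ) (Fin n) ℝ) (hAi : ∀ i, Ai i = (W i)ᵀ * A)
    (bi : Fin M → Fin ℓ → ℝ) (hbi : ∀ i, bi i = (W i)ᵀ.mulVec b)
    (Lam : ℕ → ℝ) (lam : ℕ → ℝ)
    (hlamdef : ∀ j, lam j = ∑ i ∈ Finset.range j, Lam i)
    (hpos : ∀ j, 0 < j → 0 < lam j)
    (B : ℕ → Matrix (Fin n) (Fin n) ℝ)
    (hB : ∀ j, B j = (lam j • (Lᵀ * L) + ∑ i ∈ Finset.range j, (Ai (τ i))ᵀ * Ai (τ i))⁻¹)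
    (x0 : Fin n → ℝ)
    (x : ℕ → Fin n → ℝ) (hx0 : x 0 = x0)
    (hx : ∀ k, x (k + 1) =
      x k - (B (k + 1)).mulVec ((Ai (τ k))ᵀ.mulVec ((Ai (τ k)).mulVec (x k) - bi (τ k))
        + Lam k • (Lᵀ * L).mulVec (x k))) :
    ∀ j : ℕ, 0 < j →
      x (j * M) = (Aᵀ * A + (lam (j * M) / (j : ℝ)) • (Lᵀ * L))⁻¹.mulVec (Aᵀ.mulVec b) :=
  sTik_epoch_iterate_general hM A b L hL W hW τ hτ Ai hAi bi hbi Lam lam hlamdef hpos B hB x hx
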